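/- Variation of the action on a cycle: for n ≥ 3 let X = ℤ/nℤ with rates Q such that Q(i,i+1), Q(i+1,i) > 0 for all i (indices mod n) and Q(i,j) = 0 otherwise, and let Λ be an admissible mean satisfying: Λ(s,t) → ∞ as t → ∞ for every s > 0, and also for s = 0 whenever Λ(0,t) > 0 for t > 0. Let μ, ν ∈ P(X) and let V, U : X × X → ℝ be anti-symmetric with 𝒜(μ,V) < ∞ and 𝒜(ν,U) < ∞. Assume μ(1), μ(2) > 0 and μ(i) = 0 for i ∉ {1,2}; V(1,2) ≠ 0 and V(i,j) = 0 for all {i,j} ≠ {1,2}; and U(1,2) = 0. For α ∈ [0,1] set μ^α = (1−α)μ + αν and V^α = (1−α)V + αU. Then lim_{α→0} (1/α)(𝒜(μ^α,V^α) − 𝒜(μ,V)) = −V(1,2)²/Λ(μ(1)Q(1,2), μ(2)Q(2,1)) · [ 1 + (∂₁Λ(μ(1)Q(1,2), μ(2)Q(2,1))·ν(1)Q(1,2) + ∂₂Λ(μ(1)Q(1,2), μ(2)Q(2,1))·ν(2)Q(2,1)) / Λ(μ(1)Q(1,2), μ(2)Q(2,1)) ] + Σ_{i=3}^{n−1} U(i,i+1)²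 / Λ(ν(i)Q(i,i+1), ν(i+1)Q(i+1,i)). -/

import Mathlib

open MeasureTheory
open scoped ENNReal

section Prelude

variable {X : Type*}

/-- A probability measure on a finite set, identified with its density. -/
def IsProb [Fintype X] (μ : X → ℝ) : Prop :=
  (∀ x, 0 ≤ μ x) ∧ ∑ x, μ x = 1

/-- An admissible mean in the sense of Erbar–Maas–Wirth. -/
structure AdmissibleMean (Λ : ℝ → ℝ → ℝ) : Prop where
  contOn : ContinuousOn (fun p : ℝ × ℝ => Λ p.1 p.2) (Set.Ici 0 ×ˢ Set.Ici 0)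
  smoothOn : ContDiffOn ℝ (⊤ : ℕ∞) (fun p : ℝ × ℝ => Λ p.1 p.2) (Set.Ioi 0 ×ˢ Set.Ioi 0)
  symm : ∀ s t, Λ s t = Λ t s
  homog : ∀ c s t, 0 ≤ c → 0 ≤ s → 0 ≤ t → Λ (c * s) (c * t) = c * Λ s t
  mono : ∀ s s' t, 0 ≤ s → s ≤ s' → 0 ≤ t → Λ s t ≤ Λ s' t
  concave : ConcaveOn ℝ (Set.Ici 0 ×ˢ Set.Ici 0) (fun p : ℝ × ℝ => Λ p.1 p.2)
  nonneg : ∀ s t, 0 ≤ s → 0 ≤ t → 0 ≤ Λ s t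
  normalized : Λ 1 1 = 1

/-- The convex lsc integrand `A(s,t,w)`, with values in `[0,∞]`. -/
noncomputable def Afun (Λ : ℝ → ℝ → ℝ) (s t w : ℝ) : ℝ≥0∞ :=
  if 0 < s ∧ 0 < t then ENNReal.ofReal (w ^ 2 / Λ s t)
  else if w = 0 ∧ 0 ≤ s ∧ 0 ≤ t then 0
  else ⊤

/-- The action `𝒜(μ, V)`. -/
noncomputable def action [Fintype X] (Λ : ℝ → ℝ → ℝ) (Q : X → X → ℝ)
    (μ : X → ℝ) (V : X → X → ℝ) : ℝ≥0∞ :=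
  (∑ x, ∑ y, Afun Λ (μ x * Q x y) (μ y * Q y x) (V x y)) / 2

/-- The pairing `⟨f, μ⟩ = ∑ₓ f(x) μ(x)`. -/
def dotp [Fintype X] (f μ : X → ℝ) : ℝ := ∑ x, f x * μ x

/-- The squared discrete gradient norm `‖∇ψ‖²_μ`. -/
noncomputable def gradSq [Fintype X] (Λ : ℝ → ℝ → ℝ) (Q : X → X → ℝ)
    (μ ψ : X → ℝ) : ℝ :=
  (1 / 2) * ∑ x, ∑ y, Λ (μ x * Q x y) (μ y * Q y x) * (ψ y - ψ x) ^ 2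

/-- `C¹` Hamilton–Jacobi subsolutions on `[0, T]`. -/
def IsHJ [Fintype X] (Λ : ℝ → ℝ → ℝ) (Q : X → X → ℝ) (T : ℝ) (φ : ℝ → X → ℝ) : Prop :=
  ∃ φ' : ℝ → X → ℝ,
    (∀ x, ContinuousOn (fun t => φ' t x) (Set.Icc 0 T)) ∧
    (∀ x, ∀ t ∈ Set.Icc (0 : ℝ) T,
      HasDerivWithinAt (fun s => φ s x) (φ' t x) (Set.Icc 0 T) t) ∧
    (∀ t ∈ Set.Icc (0 : ℝ) T, ∀ μ : X → ℝ, IsProb μ →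
      dotp (φ' t) μ + (1 / 2) * gradSq Λ Q μ (φ t) ≤ 0)

/-- The continuity equation on the time interval `[0,1]`. -/
def IsCE1 [Fintype X] (μ0 μ1 : X → ℝ) (μ : ℝ → X → ℝ) (V : ℝ → X → X → ℝ) : Prop :=
  (∀ x, ContinuousOn (fun t => μ t x) (Set.Icc 0 1)) ∧
  (∀ x y, IntervalIntegrable (fun s => V s x y) volume 0 1) ∧
  (∀ t ∈ Set.Icc (0 : ℝ) 1, IsProb (μ t)) ∧
  μ 0 = μ0 ∧ μ 1 = μ1 ∧
  (∀ x, ∀ t ∈ Set.Icc (0 : ℝ) 1,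
    μ t x = μ0 x - ∫ s in (0 : ℝ)..t, (1 / 2) * ∑ y, (V s x y - V s y x))

/-- Total action of a curve. -/
noncomputable def curveAction [Fintype X] (Λ : ℝ → ℝ → ℝ) (Q : X → X → ℝ)
    (μ : ℝ → X → ℝ) (V : ℝ → X → X → ℝ) : ℝ≥0∞ :=
  ∫⁻ t in Set.Icc (0 : ℝ) 1, action Λ Q (μ t) (V t)

/-- The squared discrete transport distance `W(μ0, μ1)²`. -/
noncomputable def Wsq [Fintype X] (Λ : ℝ → ℝ → ℝ) (Q : X → X → ℝ)
    (μ0 μ1 : X → ℝ) : ℝ≥0∞ :=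
  ⨅ (μ : ℝ → X → ℝ) (V : ℝ → X → X → ℝ) (_ : IsCE1 μ0 μ1 μ V), curveAction Λ Q μ V

/-- A Markov triple: nonnegative irreducible rates, vanishing on the diagonal,
reversible w.r.t. the strictly positive probability measure `pm`. -/
def IsMarkovTriple [Fintype X] (Q : X → X → ℝ) (pm : X → ℝ) : Prop :=
  (∀ x y, 0 ≤ Q x y) ∧ (∀ x, Q x x = 0) ∧
  (∀ x y, Relation.ReflTransGen (fun a b => 0 < Q a b) x y) ∧
  IsProb pm ∧ (∀ x, 0 < pm x) ∧ (∀ x y, pm x * Q x y = pm y * Q y x)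

/-- A subset is connected if any two of its points are joined by a path inside it
along which `Q` is positive. -/
def IsConnectedSubset (Q : X → X → ℝ) (Y : Set X) : Prop :=
  ∀ y ∈ Y, ∀ y' ∈ Y, Relation.ReflTransGen (fun a b => b ∈ Y ∧ 0 < Q a b) y y'

/-- `T` is a retraction of `X` onto `Y`. -/
def IsRetraction [Fintype X] [DecidableEq X] (Q : X → X → ℝ) (Y : Set X) (T : X → X) : Prop :=
  (∀ x, T x ∈ Y) ∧ (∀ y ∈ Y, T y = y) ∧
  ∀ y ∈ Y, ∀ y' ∈ Y, y ≠ y' → ∀ x, T x = y →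
    (∑ x' ∈ Finset.univ.filter (fun x' => T x' = y'), Q x x') ≤ Q y y'

/-- `Y` has the retraction property. -/
def HasRetractionProperty [Fintype X] [DecidableEq X] (Q : X → X → ℝ) (Y : Set X) : Prop :=
  IsConnectedSubset Q Y ∧ ∃ T : X → X, IsRetraction Q Y T

end Prelude

section Helpers

lemma lam_pos {Λ : ℝ → ℝ → ℝ} (hΛ : AdmissibleMean Λ) {s t : ℝ} (hs : 0 < s) (ht : 0 < t) :
    0 < Λ s t := by
  have hm : 0 < min s t := lt_min hs ht
  have h1 : Λ (min s t) (min s t) = min s t := by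
    have := hΛ.homog (min s t) 1 1 hm.le zero_le_one zero_le_one
    simpa [hΛ.normalized] using this
  calc 0 < min s t := hm
    _ = Λ (min s t) (min s t) := h1.symm
    _ ≤ Λ s (min s t) := hΛ.mono _ _ _ hm.le (min_le_left _ _) hm.le
    _ = Λ (min s t) s := hΛ.symm _ _
    _ ≤ Λ t s := hΛ.mono _ _ _ hm.le (min_le_right _ _) hs.le
    _ = Λ s t := hΛ.symm _ _

lemma Afun_ne_top_pos {Λ : ℝ → ℝ → ℝ} {s t w : ℝ} (h : Afun Λ s t w ≠ ⊤) (hw : w ≠ 0) :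
    0 < s ∧ 0 < t := by
  by_contra hc
  exact h (by simp [Afun, hc, hw])

lemma Afun_swap (Λ : ℝ → ℝ → ℝ) (hsym : ∀ s t, Λ s t = Λ t s) (s t w : ℝ) :
    Afun Λ t s (-w) = Afun Λ s t w := by
  unfold Afun
  rw [hsym t s, show ((-w) ^ 2 : ℝ) = w ^ 2 by ring]
  simp only [neg_eq_zero]
  split_ifs with h1 h2 h3 h4 h5 h6 <;> first | rfl | (exfalso; tauto)

/-- Closed formula for the action on the `n`-cycle. -/
lemma action_toReal_formula {n : ℕ} [NeZero n] (hn : 3 ≤ n) (Λ : ℝ → ℝ → ℝ)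
    (hsym : ∀ s t, Λ s t = Λ t s) (hnn : ∀ s t, 0 ≤ s → 0 ≤ t → 0 ≤ Λ s t)
    (Q : ZMod n → ZMod n → ℝ)
    (hQzero : ∀ i j : ZMod n, j ≠ i + 1 → i ≠ j + 1 → Q i j = 0)
    (hQnn : ∀ x y, 0 ≤ Q x y)
    (ρ : ZMod n → ℝ) (hρ : ∀ i, 0 ≤ ρ i)
    (W : ZMod n → ZMod n → ℝ) (hWas : ∀ i j, W i j = - W j i)
    (hW : ∀ x y, W x y ≠ 0 → 0 < ρ x * Q x y ∧ 0 < ρ y * Q y x) :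
    (action Λ Q ρ W).toReal
      = ∑ i : ZMod n, (W i (i + 1)) ^ 2 / Λ (ρ i * Q i (i + 1)) (ρ (i + 1) * Q (i + 1) i) := by
  classical
  have h2ne : (2 : ZMod n) ≠ 0 := by
    intro h
    have h2 : ((2 : ℕ) : ZMod n) = 0 := by push_cast; exact h
    have hv := ZMod.val_cast_of_lt (show 2 < n by omega)
    rw [h2] at hv
    simp at hv
  have hpair : ∀ x : ZMod n, x + 1 ≠ x - 1 := fun x h => h2ne (by linear_combination h)
  have hterm : ∀ x : ZMod n,
      Afun Λ (ρ x * Q x (x + 1)) (ρ (x + 1) * Q (x + 1) x) (W x (x + 1))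
        = ENNReal.ofReal
            ((W x (x + 1)) ^ 2 / Λ (ρ x * Q x (x + 1)) (ρ (x + 1) * Q (x + 1) x)) := by
    intro x
    by_cases hw : W x (x + 1) = 0
    · have hs : 0 ≤ ρ x * Q x (x + 1) := mul_nonneg (hρ _) (hQnn _ _)
      have ht : 0 ≤ ρ (x + 1) * Q (x + 1) x := mul_nonneg (hρ _) (hQnn _ _)
      rw [hw]
      unfold Afun
      split_ifs with h h2
      · rfl
      · simp
      · exact absurd ⟨rfl, hs, ht⟩ h2
    · obtain ⟨h1, h2⟩ := hW _ _ hw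
      unfold Afun
      rw [if_pos ⟨h1, h2⟩]
  have hzero : ∀ x y : ZMod n, y ≠ x + 1 → y ≠ x - 1 →
      Afun Λ (ρ x * Q x y) (ρ y * Q y x) (W x y) = 0 := by
    intro x y h1 h2
    have hxy : Q x y = 0 := hQzero x y h1 (fun h => h2 (by linear_combination -h))
    have hyx : Q y x = 0 := hQzero y x (fun h => h2 (by linear_combination -h)) h1
    have hw : W x y = 0 := by
      by_contra hc
      have := (hW x y hc).1
      rw [hxy] at this
      simp at this
    rw [hxy, hyx, hw]
    simp [Afun]
  have hrow : ∀ x : ZMod n,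
      (∑ y, Afun Λ (ρ x * Q x y) (ρ y * Q y x) (W x y))
        = Afun Λ (ρ x * Q x (x + 1)) (ρ (x + 1) * Q (x + 1) x) (W x (x + 1))
          + Afun Λ (ρ x * Q x (x - 1)) (ρ (x - 1) * Q (x - 1) x) (W x (x - 1)) := by
    intro x
    have hp := Finset.sum_pair (f := fun y => Afun Λ (ρ x * Q x y) (ρ y * Q y x) (W x y))
      (hpair x)
    rw [← hp]
    refine (Finset.sum_subset (Finset.subset_univ _) fun y _ hy => ?_).symm
    simp only [Finset.mem_insert, Finset.mem_singleton, not_or] at hy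
    exact hzero x y hy.1 hy.2
  have hswap : (∑ x : ZMod n, Afun Λ (ρ x * Q x (x - 1)) (ρ (x - 1) * Q (x - 1) x) (W x (x - 1)))
      = ∑ x : ZMod n, Afun Λ (ρ x * Q x (x + 1)) (ρ (x + 1) * Q (x + 1) x) (W x (x + 1)) := by
    refine Fintype.sum_equiv (Equiv.subRight (1 : ZMod n)) _ _ fun x => ?_
    simp only [Equiv.subRight_apply, sub_add_cancel]
    rw [hWas x (x - 1)]
    exact Afun_swap Λ hsym _ _ _
  have hS : (∑ x : ZMod n, ∑ y, Afun Λ (ρ x * Q x y) (ρ y * Q y x) (W x y))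
      = (∑ x : ZMod n, Afun Λ (ρ x * Q x (x + 1)) (ρ (x + 1) * Q (x + 1) x) (W x (x + 1)))
        + ∑ x : ZMod n, Afun Λ (ρ x * Q x (x + 1)) (ρ (x + 1) * Q (x + 1) x) (W x (x + 1)) := by
    rw [Finset.sum_congr rfl fun x _ => hrow x, Finset.sum_add_distrib, hswap]
  set T := ∑ x : ZMod n, Afun Λ (ρ x * Q x (x + 1)) (ρ (x + 1) * Q (x + 1) x) (W x (x + 1))
    with hT
  have hTne : T ≠ ⊤ := by
    rw [hT, ENNReal.sum_ne_top]
    intro x _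
    rw [hterm x]
    exact ENNReal.ofReal_ne_top
  have hTtoReal : T.toReal
      = ∑ i : ZMod n, (W i (i + 1)) ^ 2 / Λ (ρ i * Q i (i + 1)) (ρ (i + 1) * Q (i + 1) i) := by
    rw [hT, ENNReal.toReal_sum (fun x _ => by rw [hterm x]; exact ENNReal.ofReal_ne_top)]
    refine Finset.sum_congr rfl fun x _ => ?_
    rw [hterm x, ENNReal.toReal_ofReal]
    exact div_nonneg (sq_nonneg _) (hnn _ _ (mul_nonneg (hρ _) (hQnn _ _))
      (mul_nonneg (hρ _) (hQnn _ _)))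
  unfold action
  rw [hS, ENNReal.toReal_div, ENNReal.toReal_add hTne hTne, hTtoReal]
  norm_num

end Helpers

set_option maxHeartbeats 2000000

/-- **Variation of the action on a cycle** (Lemma 6.2): on the `n`-cycle (`n ≥ 3`) with
nearest-neighbour rates, for `μ` supported on `{1,2}` with `V` charging only the edge
`(1,2)`, perturbing towards `(ν, U)` with `U(1,2) = 0` changes the action to first order
in `α` by the explicit expression below. -/
theorem action_variation_cycle (n : ℕ) [NeZero n] (hn : 3 ≤ n)
    (Λ : ℝ → ℝ → ℝ) (hΛ : AdmissibleMean Λ)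
    (hΛtop : ∀ s : ℝ, 0 < s → Filter.Tendsto (fun t => Λ s t) Filter.atTop Filter.atTop)
    (hΛzero : (∀ t : ℝ, 0 < t → 0 < Λ 0 t) →
      Filter.Tendsto (fun t => Λ 0 t) Filter.atTop Filter.atTop)
    (Q : ZMod n → ZMod n → ℝ)
    (hQpos : ∀ i : ZMod n, 0 < Q i (i + 1) ∧ 0 < Q (i + 1) i)
    (hQzero : ∀ i j : ZMod n, j ≠ i + 1 → i ≠ j + 1 → Q i j = 0)
    (μ ν : ZMod n → ℝ) (hμ : IsProb μ) (hν : IsProb ν)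
    (V U : ZMod n → ZMod n → ℝ)
    (hVas : ∀ i j, V i j = - V j i) (hUas : ∀ i j, U i j = - U j i)
    (hAV : action Λ Q μ V ≠ ⊤) (hAU : action Λ Q ν U ≠ ⊤)
    (hμ1 : 0 < μ 1) (hμ2 : 0 < μ 2)
    (hμsupp : ∀ i : ZMod n, i ≠ 1 → i ≠ 2 → μ i = 0)
    (hV12 : V 1 2 ≠ 0)
    (hVsupp : ∀ i j : ZMod n, ¬(i = 1 ∧ j = 2) → ¬(i = 2 ∧ j = 1) → V i j = 0)
    (hU12 : U 1 2 = 0) :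
    Filter.Tendsto (fun α : ℝ =>
        ((action Λ Q (fun i => (1 - α) * μ i + α * ν i)
            (fun i j => (1 - α) * V i j + α * U i j)).toReal
          - (action Λ Q μ V).toReal) / α)
      (nhdsWithin 0 (Set.Ioi 0))
      (nhds (
        - (V 1 2) ^ 2 / Λ (μ 1 * Q 1 2) (μ 2 * Q 2 1) *
          (1 + (deriv (fun s => Λ s (μ 2 * Q 2 1)) (μ 1 * Q 1 2) * (ν 1 * Q 1 2)
              + deriv (fun t => Λ (μ 1 * Q 1 2) t) (μ 2 * Q 2 1) * (ν 2 * Q 2 1))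
            / Λ (μ 1 * Q 1 2) (μ 2 * Q 2 1))
        + ∑ i ∈ Finset.Icc 3 (n - 1),
            (U (i : ZMod n) ((i : ZMod n) + 1)) ^ 2
              / Λ (ν (i : ZMod n) * Q (i : ZMod n) ((i : ZMod n) + 1))
                  (ν ((i : ZMod n) + 1) * Q ((i : ZMod n) + 1) (i : ZMod n)))) := by
  classical
  haveI : Fact (1 < n) := ⟨by omega⟩
  -- basic arithmetic in `ZMod n`
  have h1ne0 : (1 : ZMod n) ≠ 0 := one_ne_zero
  have h2ne0 : (2 : ZMod n) ≠ 0 := by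
    intro h
    have h2 : ((2 : ℕ) : ZMod n) = 0 := by push_cast; exact h
    have hv := ZMod.val_cast_of_lt (show 2 < n by omega)
    rw [h2] at hv
    simp at hv
  have e12 : (1 : ZMod n) + 1 = 2 := one_add_one_eq_two
  have e23 : (2 : ZMod n) + 1 = 3 := by norm_num
  have ne12 : (1 : ZMod n) ≠ 2 := fun h => h1ne0 (by linear_combination -h)
  have ne01 : (0 : ZMod n) ≠ 1 := fun h => h1ne0 h.symm
  have ne02 : (0 : ZMod n) ≠ 2 := fun h => h2ne0 h.symm
  have ne31 : (3 : ZMod n) ≠ 1 := fun h => h2ne0 (by linear_combination h)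
  have ne32 : (3 : ZMod n) ≠ 2 := fun h => h1ne0 (by linear_combination h)
  have hval1 : (1 : ZMod n).val = 1 := ZMod.val_one n
  have hval2 : (2 : ZMod n).val = 2 := by
    have h2 : ((2 : ℕ) : ZMod n).val = 2 := ZMod.val_cast_of_lt (by omega)
    rwa [show ((2 : ℕ) : ZMod n) = 2 by push_cast; ring] at h2
  have hQnn : ∀ x y : ZMod n, 0 ≤ Q x y := by
    intro x y
    by_cases h1 : y = x + 1
    · rw [h1]; exact (hQpos x).1.le
    by_cases h2 : x = y + 1
    · rw [h2]; exact (hQpos y).2.le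
    · exact (hQzero x y h1 h2).ge
  have hμnn := hμ.1
  have hνnn := hν.1
  -- finiteness of the action forces positivity on charged edges
  have hfin : ∀ (ρ : ZMod n → ℝ) (W : ZMod n → ZMod n → ℝ), action Λ Q ρ W ≠ ⊤ →
      ∀ x y, W x y ≠ 0 → 0 < ρ x * Q x y ∧ 0 < ρ y * Q y x := by
    intro ρ W hA x y hw
    refine Afun_ne_top_pos (Λ := Λ) ?_ hw
    intro htop
    apply hA
    unfold action
    have hS : (∑ a : ZMod n, ∑ b : ZMod n, Afun Λ (ρ a * Q a b) (ρ b * Q b a) (W a b)) = ⊤ := by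
      rw [ENNReal.sum_eq_top]
      exact ⟨x, Finset.mem_univ x, by rw [ENNReal.sum_eq_top]; exact ⟨y, Finset.mem_univ y, htop⟩⟩
    rw [hS]
    exact ENNReal.top_div_of_ne_top (by norm_num)
  have hVpos := hfin μ V hAV
  have hUpos := hfin ν U hAU
  have hQ12 : 0 < Q 1 2 := by have h := (hQpos 1).1; rwa [e12] at h
  have hQ21 : 0 < Q 2 1 := by have h := (hQpos 1).2; rwa [e12] at h
  have hQ01 : 0 < Q 0 1 := by have h := (hQpos 0).1; rwa [zero_add] at h
  have hQ10 : 0 < Q 1 0 := by have h := (hQpos 0).2; rwa [zero_add] at h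
  have hQ23 : 0 < Q 2 3 := by have h := (hQpos 2).1; rwa [e23] at h
  have hQ32 : 0 < Q 3 2 := by have h := (hQpos 2).2; rwa [e23] at h
  set a := μ 1 * Q 1 2 with ha_def
  set b := μ 2 * Q 2 1 with hb_def
  have hapos : 0 < a := mul_pos hμ1 hQ12
  have hbpos : 0 < b := mul_pos hμ2 hQ21
  set L := Λ a b with hL_def
  have hLpos : 0 < L := by rw [hL_def]; exact lam_pos hΛ hapos hbpos
  set p := deriv (fun s => Λ s b) a with hp_def
  set q := deriv (fun t => Λ a t) b with hq_def
  -- the Fréchet derivative of Λ at (a, b)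
  have hdiff : DifferentiableAt ℝ (fun z : ℝ × ℝ => Λ z.1 z.2) (a, b) :=
    (hΛ.smoothOn.differentiableOn (by simp)).differentiableAt
      ((isOpen_Ioi.prod isOpen_Ioi).mem_nhds ⟨hapos, hbpos⟩)
  set Df := fderiv ℝ (fun z : ℝ × ℝ => Λ z.1 z.2) (a, b) with hDf_def
  have hDf : HasFDerivAt (fun z : ℝ × ℝ => Λ z.1 z.2) Df (a, b) := hdiff.hasFDerivAt
  have hp' : p = Df (1, 0) := by
    have h1 : HasDerivAt (fun s => Λ s b) (Df (1, 0)) a :=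
      by have := hDf.comp_hasDerivAt a (HasDerivAt.prodMk (hasDerivAt_id a) (hasDerivAt_const a b)); exact this
    rw [hp_def]
    exact h1.deriv
  have hq' : q = Df (0, 1) := by
    have h1 : HasDerivAt (fun t => Λ a t) (Df (0, 1)) b :=
      by have := hDf.comp_hasDerivAt b (HasDerivAt.prodMk (hasDerivAt_const b a) (hasDerivAt_id b)); exact this
    rw [hq_def]
    exact h1.deriv
  have hlin : ∀ x y : ℝ, Df (x, y) = x * Df (1, 0) + y * Df (0, 1) := by
    intro x y
    have hxy : ((x, y) : ℝ × ℝ) = x • ((1 : ℝ), (0 : ℝ)) + y • ((0 : ℝ), (1 : ℝ)) := by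
      simp [Prod.ext_iff]
    rw [hxy, map_add, ContinuousLinearMap.map_smul, ContinuousLinearMap.map_smul,
      smul_eq_mul, smul_eq_mul]
  have hEuler : Df (a, b) = L := by
    have hline : HasDerivAt (fun c : ℝ => ((c * a, c * b) : ℝ × ℝ)) ((1 : ℝ) * a, (1 : ℝ) * b) 1 :=
      HasDerivAt.prodMk ((hasDerivAt_id 1).mul_const a) ((hasDerivAt_id 1).mul_const b)
    have hDf1 : HasFDerivAt (fun z : ℝ × ℝ => Λ z.1 z.2) Df ((1 : ℝ) * a, (1 : ℝ) * b) := by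
      rw [one_mul, one_mul]; exact hDf
    have h1 : HasDerivAt (fun c : ℝ => Λ (c * a) (c * b)) (Df ((1 : ℝ) * a, (1 : ℝ) * b)) 1 :=
      by have := hDf1.comp_hasDerivAt 1 hline; exact this
    have h1' : HasDerivAt (fun c : ℝ => Λ (c * a) (c * b)) (Df (a, b)) 1 := by
      rwa [one_mul, one_mul] at h1
    have h2 : HasDerivAt (fun c : ℝ => c * L) L 1 := by
      simpa using (hasDerivAt_id (1 : ℝ)).mul_const L
    have heq : (fun c : ℝ => c * L) =ᶠ[nhds 1] fun c : ℝ => Λ (c * a) (c * b) := by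
      filter_upwards [isOpen_Ioi.mem_nhds (show (0 : ℝ) < 1 by norm_num)] with t ht
      rw [hL_def, ← hΛ.homog t a b (le_of_lt ht) hapos.le hbpos.le]
    exact (h1'.congr_of_eventuallyEq heq).unique h2
  set M := -V 1 2 ^ 2 / L * (1 + (p * (ν 1 * Q 1 2) + q * (ν 2 * Q 2 1)) / L) with hM_def
  set c : ZMod n → ℝ :=
    fun x => U x (x + 1) ^ 2 / Λ (ν x * Q x (x + 1)) (ν (x + 1) * Q (x + 1) x) with hc_def
  set lf : ZMod n → ℝ := fun i => if i = 1 then M else if i = 0 ∨ i = 2 then 0 else c i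
    with hlf_def
  -- the termwise limits
  have hper : ∀ i : ZMod n, Filter.Tendsto (fun α : ℝ =>
      (((1 - α) * V i (i + 1) + α * U i (i + 1)) ^ 2 /
          Λ (((1 - α) * μ i + α * ν i) * Q i (i + 1))
            (((1 - α) * μ (i + 1) + α * ν (i + 1)) * Q (i + 1) i)
        - V i (i + 1) ^ 2 / Λ (μ i * Q i (i + 1)) (μ (i + 1) * Q (i + 1) i)) / α)
      (nhdsWithin 0 (Set.Ioi 0)) (nhds (lf i)) := by
    intro i
    by_cases hi1 : i = 1
    · -- main edge
      subst hi1
      have hlf1 : lf 1 = M := by simp [hlf_def]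
      rw [hlf1]
      simp only [e12, hU12, mul_zero, add_zero]
      have hAder : HasDerivAt (fun α : ℝ => ((1 - α) * μ 1 + α * ν 1) * Q 1 2)
          ((-1 * μ 1 + 1 * ν 1) * Q 1 2) 0 :=
        ((((hasDerivAt_id (0 : ℝ)).const_sub 1).mul_const (μ 1)).add
          ((hasDerivAt_id (0 : ℝ)).mul_const (ν 1))).mul_const (Q 1 2)
      have hBder : HasDerivAt (fun α : ℝ => ((1 - α) * μ 2 + α * ν 2) * Q 2 1)
          ((-1 * μ 2 + 1 * ν 2) * Q 2 1) 0 :=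
        ((((hasDerivAt_id (0 : ℝ)).const_sub 1).mul_const (μ 2)).add
          ((hasDerivAt_id (0 : ℝ)).mul_const (ν 2))).mul_const (Q 2 1)
      have hg0 : ((((1 - (0:ℝ)) * μ 1 + 0 * ν 1) * Q 1 2,
          ((1 - (0:ℝ)) * μ 2 + 0 * ν 2) * Q 2 1) : ℝ × ℝ) = (a, b) := by
        rw [ha_def, hb_def]; norm_num
      have hDf0 : HasFDerivAt (fun z : ℝ × ℝ => Λ z.1 z.2) Df
          (((1 - (0:ℝ)) * μ 1 + 0 * ν 1) * Q 1 2, ((1 - (0:ℝ)) * μ 2 + 0 * ν 2) * Q 2 1) := by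
        rw [hg0]; exact hDf
      have hLder : HasDerivAt (fun α : ℝ =>
          Λ (((1 - α) * μ 1 + α * ν 1) * Q 1 2) (((1 - α) * μ 2 + α * ν 2) * Q 2 1))
          (Df ((-1 * μ 1 + 1 * ν 1) * Q 1 2, (-1 * μ 2 + 1 * ν 2) * Q 2 1)) 0 :=
        by have := hDf0.comp_hasDerivAt 0 (HasDerivAt.prodMk hAder hBder); exact this
      have he1 : (((1 - (0:ℝ)) * μ 1 + 0 * ν 1) * Q 1 2) = a := by rw [ha_def]; norm_num
      have he2 : (((1 - (0:ℝ)) * μ 2 + 0 * ν 2) * Q 2 1) = b := by rw [hb_def]; norm_num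
      have hL0ne : Λ (((1 - (0:ℝ)) * μ 1 + 0 * ν 1) * Q 1 2)
          (((1 - (0:ℝ)) * μ 2 + 0 * ν 2) * Q 2 1) ≠ 0 := by
        rw [he1, he2, ← hL_def]
        exact hLpos.ne'
      have hNum := (((hasDerivAt_id (0 : ℝ)).const_sub 1).mul_const (V 1 2)).pow 2
      have hquot := hNum.div hLder hL0ne
      have hDD : Df ((-1 * μ 1 + 1 * ν 1) * Q 1 2, (-1 * μ 2 + 1 * ν 2) * Q 2 1)
          = (p * (ν 1 * Q 1 2) + q * (ν 2 * Q 2 1)) - L := by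
        rw [hlin, ← hp', ← hq']
        have hLpq : L = p * a + q * b := by
          rw [← hEuler, hlin, ← hp', ← hq']
          ring
        rw [hLpq, ha_def, hb_def]
        ring
      have hM' : HasDerivAt (fun α : ℝ => ((1 - α) * V 1 2) ^ 2 /
          Λ (((1 - α) * μ 1 + α * ν 1) * Q 1 2) (((1 - α) * μ 2 + α * ν 2) * Q 2 1)) M 0 := by
        refine hquot.congr_deriv (Eq.symm ?_)
        rw [hDD, hM_def]
        rw [he1, he2, ← hL_def]
        norm_num
        field_simp
        ring
      have hslope := hasDerivAt_iff_tendsto_slope.mp hM'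
      have hmono : nhdsWithin (0:ℝ) (Set.Ioi 0) ≤ nhdsWithin (0:ℝ) {(0:ℝ)}ᶜ := by
        apply nhdsWithin_mono
        intro x hx
        simp only [Set.mem_compl_iff, Set.mem_singleton_iff]
        exact ne_of_gt hx
      refine (hslope.mono_left hmono).congr fun α => ?_
      rw [slope_def_field, sub_zero]
      norm_num
    by_cases hi0 : i = 0
    · -- edge {0, 1}
      subst hi0
      have hlf0 : lf 0 = 0 := by simp [hlf_def, ne01]
      rw [hlf0]
      simp only [zero_add]
      have hV01 : V 0 1 = 0 := hVsupp 0 1 (fun h => ne01 h.1) (fun h => ne02 h.1)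
      have hμ0' : μ 0 = 0 := hμsupp 0 ne01 ne02
      by_cases hU01 : U 0 1 = 0
      · have hfe : (fun α : ℝ => (((1 - α) * V 0 1 + α * U 0 1) ^ 2 /
            Λ (((1 - α) * μ 0 + α * ν 0) * Q 0 1) (((1 - α) * μ 1 + α * ν 1) * Q 1 0)
            - V 0 1 ^ 2 / Λ (μ 0 * Q 0 1) (μ 1 * Q 1 0)) / α) = fun _ => (0:ℝ) := by
          funext α
          rw [hV01, hU01]
          norm_num
        rw [hfe]
        exact tendsto_const_nhds
      · obtain ⟨hs0, ht0⟩ := hUpos 0 1 hU01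
        have hlim0 : Filter.Tendsto (fun α : ℝ => U 0 1 ^ 2 /
            Λ (ν 0 * Q 0 1) ((((1 - α) * μ 1 + α * ν 1) * Q 1 0) * α⁻¹))
            (nhdsWithin 0 (Set.Ioi 0)) (nhds 0) := by
          have hc' : Continuous (fun α : ℝ => ((1 - α) * μ 1 + α * ν 1) * Q 1 0) := by fun_prop
          have hcont : Filter.Tendsto (fun α : ℝ => ((1 - α) * μ 1 + α * ν 1) * Q 1 0)
              (nhdsWithin 0 (Set.Ioi 0)) (nhds (μ 1 * Q 1 0)) :=
            (hc'.tendsto' 0 (μ 1 * Q 1 0) (by norm_num)).mono_left nhdsWithin_le_nhds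
          have hat : Filter.Tendsto (fun α : ℝ => (((1 - α) * μ 1 + α * ν 1) * Q 1 0) * α⁻¹)
              (nhdsWithin 0 (Set.Ioi 0)) Filter.atTop :=
            Filter.Tendsto.pos_mul_atTop (mul_pos hμ1 hQ10) hcont tendsto_inv_nhdsGT_zero
          exact Filter.Tendsto.div_atTop tendsto_const_nhds ((hΛtop _ hs0).comp hat)
        refine Filter.Tendsto.congr' ?_ hlim0
        filter_upwards [Ioo_mem_nhdsGT_of_mem (show (0:ℝ) ∈ Set.Ico 0 1 by norm_num)] with α hα
        obtain ⟨hα0, hα1⟩ := hα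
        have htnn : 0 ≤ ((1 - α) * μ 1 + α * ν 1) * Q 1 0 :=
          mul_nonneg (add_nonneg (mul_nonneg (by linarith) (hμnn 1))
            (mul_nonneg hα0.le (hνnn 1))) hQ10.le
        have htpos : 0 < ((1 - α) * μ 1 + α * ν 1) * Q 1 0 :=
          mul_pos (add_pos_of_pos_of_nonneg (mul_pos (by linarith) hμ1)
            (mul_nonneg hα0.le (hνnn 1))) hQ10
        have hZpos : 0 < Λ (ν 0 * Q 0 1) ((((1 - α) * μ 1 + α * ν 1) * Q 1 0) * α⁻¹) :=
          lam_pos hΛ hs0 (mul_pos htpos (inv_pos.mpr hα0))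
        have e1 : ((1 - α) * μ 0 + α * ν 0) * Q 0 1 = α * (ν 0 * Q 0 1) := by
          rw [hμ0']; ring
        have e2 : ((1 - α) * μ 1 + α * ν 1) * Q 1 0
            = α * ((((1 - α) * μ 1 + α * ν 1) * Q 1 0) * α⁻¹) := by
          field_simp
        rw [hV01, e1]
        conv_rhs => rw [e2]
        rw [hΛ.homog α (ν 0 * Q 0 1) ((((1 - α) * μ 1 + α * ν 1) * Q 1 0) * α⁻¹) hα0.le
          (mul_nonneg (hνnn 0) hQ01.le) (mul_nonneg htnn (inv_nonneg.mpr hα0.le))]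
        rw [show ((1 - α) * (0:ℝ) + α * U 0 1) = α * U 0 1 by ring,
          show ((0:ℝ) ^ 2 / Λ (μ 0 * Q 0 1) (μ 1 * Q 1 0)) = 0 by norm_num, sub_zero,
          mul_pow, div_div,
          show ∀ Z : ℝ, α * Z * α = α ^ 2 * Z from fun Z => by ring,
          mul_div_mul_left _ _ (pow_ne_zero 2 (ne_of_gt hα0))]
    by_cases hi2 : i = 2
    · -- edge {2, 3}
      subst hi2
      have h21 : (2 : ZMod n) ≠ 1 := Ne.symm ne12
      have hlf2 : lf 2 = 0 := by simp [hlf_def, h21]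
      rw [hlf2]
      simp only [e23]
      have hV23 : V 2 3 = 0 := hVsupp 2 3 (fun h => ne12 h.1.symm) (fun h => ne31 h.2)
      have hμ3' : μ 3 = 0 := hμsupp 3 ne31 ne32
      by_cases hU23 : U 2 3 = 0
      · have hfe : (fun α : ℝ => (((1 - α) * V 2 3 + α * U 2 3) ^ 2 /
            Λ (((1 - α) * μ 2 + α * ν 2) * Q 2 3) (((1 - α) * μ 3 + α * ν 3) * Q 3 2)
            - V 2 3 ^ 2 / Λ (μ 2 * Q 2 3) (μ 3 * Q 3 2)) / α) = fun _ => (0:ℝ) := by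
          funext α
          rw [hV23, hU23]
          norm_num
        rw [hfe]
        exact tendsto_const_nhds
      · obtain ⟨hs2, ht3⟩ := hUpos 2 3 hU23
        have hlim2 : Filter.Tendsto (fun α : ℝ => U 2 3 ^ 2 /
            Λ (ν 3 * Q 3 2) ((((1 - α) * μ 2 + α * ν 2) * Q 2 3) * α⁻¹))
            (nhdsWithin 0 (Set.Ioi 0)) (nhds 0) := by
          have hc' : Continuous (fun α : ℝ => ((1 - α) * μ 2 + α * ν 2) * Q 2 3) := by fun_prop
          have hcont : Filter.Tendsto (fun α : ℝ => ((1 - α) * μ 2 + α * ν 2) * Q 2 3)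
              (nhdsWithin 0 (Set.Ioi 0)) (nhds (μ 2 * Q 2 3)) :=
            (hc'.tendsto' 0 (μ 2 * Q 2 3) (by norm_num)).mono_left nhdsWithin_le_nhds
          have hat : Filter.Tendsto (fun α : ℝ => (((1 - α) * μ 2 + α * ν 2) * Q 2 3) * α⁻¹)
              (nhdsWithin 0 (Set.Ioi 0)) Filter.atTop :=
            Filter.Tendsto.pos_mul_atTop (mul_pos hμ2 hQ23) hcont tendsto_inv_nhdsGT_zero
          exact Filter.Tendsto.div_atTop tendsto_const_nhds ((hΛtop _ ht3).comp hat)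
        refine Filter.Tendsto.congr' ?_ hlim2
        filter_upwards [Ioo_mem_nhdsGT_of_mem (show (0:ℝ) ∈ Set.Ico 0 1 by norm_num)] with α hα
        obtain ⟨hα0, hα1⟩ := hα
        have htnn : 0 ≤ ((1 - α) * μ 2 + α * ν 2) * Q 2 3 :=
          mul_nonneg (add_nonneg (mul_nonneg (by linarith) (hμnn 2))
            (mul_nonneg hα0.le (hνnn 2))) hQ23.le
        have htpos : 0 < ((1 - α) * μ 2 + α * ν 2) * Q 2 3 :=
          mul_pos (add_pos_of_pos_of_nonneg (mul_pos (by linarith) hμ2)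
            (mul_nonneg hα0.le (hνnn 2))) hQ23
        have hZpos : 0 < Λ (ν 3 * Q 3 2) ((((1 - α) * μ 2 + α * ν 2) * Q 2 3) * α⁻¹) :=
          lam_pos hΛ ht3 (mul_pos htpos (inv_pos.mpr hα0))
        have e1 : ((1 - α) * μ 3 + α * ν 3) * Q 3 2 = α * (ν 3 * Q 3 2) := by
          rw [hμ3']; ring
        have e2 : ((1 - α) * μ 2 + α * ν 2) * Q 2 3
            = α * ((((1 - α) * μ 2 + α * ν 2) * Q 2 3) * α⁻¹) := by
          field_simp
        rw [hV23, e1, hΛ.symm (((1 - α) * μ 2 + α * ν 2) * Q 2 3) (α * (ν 3 * Q 3 2))]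
        conv_rhs => rw [e2]
        rw [hΛ.homog α (ν 3 * Q 3 2) ((((1 - α) * μ 2 + α * ν 2) * Q 2 3) * α⁻¹) hα0.le
          (mul_nonneg (hνnn 3) hQ32.le) (mul_nonneg htnn (inv_nonneg.mpr hα0.le))]
        rw [show ((1 - α) * (0:ℝ) + α * U 2 3) = α * U 2 3 by ring,
          show ((0:ℝ) ^ 2 / Λ (μ 2 * Q 2 3) (μ 3 * Q 3 2)) = 0 by norm_num, sub_zero,
          mul_pow, div_div,
          show ∀ Z : ℝ, α * Z * α = α ^ 2 * Z from fun Z => by ring,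
          mul_div_mul_left _ _ (pow_ne_zero 2 (ne_of_gt hα0))]
    · -- edges away from the support of μ
      have hlfi : lf i = c i := by simp [hlf_def, hi1, hi0, hi2]
      rw [hlfi]
      have hμi : μ i = 0 := hμsupp i hi1 hi2
      have hμi1 : μ (i + 1) = 0 := hμsupp (i + 1)
        (fun h => hi0 (by linear_combination h)) (fun h => hi1 (by linear_combination h))
      have hVi : V i (i + 1) = 0 := hVsupp i (i + 1) (fun h => hi1 h.1) (fun h => hi2 h.1)
      by_cases hUi : U i (i + 1) = 0
      · have hci : c i = 0 := by simp [hc_def, hUi]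
        rw [hci]
        have hfe : (fun α : ℝ => (((1 - α) * V i (i + 1) + α * U i (i + 1)) ^ 2 /
            Λ (((1 - α) * μ i + α * ν i) * Q i (i + 1))
              (((1 - α) * μ (i + 1) + α * ν (i + 1)) * Q (i + 1) i)
            - V i (i + 1) ^ 2 / Λ (μ i * Q i (i + 1)) (μ (i + 1) * Q (i + 1) i)) / α)
            = fun _ => (0:ℝ) := by
          funext α
          rw [hVi, hUi]
          norm_num
        rw [hfe]
        exact tendsto_const_nhds
      · obtain ⟨hsi, hti⟩ := hUpos i (i + 1) hUi
        have hZ : 0 < Λ (ν i * Q i (i + 1)) (ν (i + 1) * Q (i + 1) i) := lam_pos hΛ hsi hti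
        refine Filter.Tendsto.congr' ?_ tendsto_const_nhds
        filter_upwards [Ioo_mem_nhdsGT_of_mem (show (0:ℝ) ∈ Set.Ico 0 1 by norm_num)] with α hα
        obtain ⟨hα0, hα1⟩ := hα
        have e1 : ((1 - α) * μ i + α * ν i) * Q i (i + 1) = α * (ν i * Q i (i + 1)) := by
          rw [hμi]; ring
        have e2 : ((1 - α) * μ (i + 1) + α * ν (i + 1)) * Q (i + 1) i
            = α * (ν (i + 1) * Q (i + 1) i) := by
          rw [hμi1]; ring
        rw [hVi, e1, e2, hΛ.homog α (ν i * Q i (i + 1)) (ν (i + 1) * Q (i + 1) i) hα0.le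
          (mul_nonneg (hνnn i) (hQnn _ _)) (mul_nonneg (hνnn _) (hQnn _ _))]
        rw [show ((1 - α) * (0:ℝ) + α * U i (i + 1)) = α * U i (i + 1) by ring,
          show ((0:ℝ) ^ 2 / Λ (μ i * Q i (i + 1)) (μ (i + 1) * Q (i + 1) i)) = 0 by norm_num,
          sub_zero, mul_pow, div_div,
          show ∀ Z : ℝ, α * Z * α = α ^ 2 * Z from fun Z => by ring,
          mul_div_mul_left _ _ (pow_ne_zero 2 (ne_of_gt hα0))]
  -- identify the difference quotient with the termwise sum
  have hF0 : (action Λ Q μ V).toReal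
      = ∑ i : ZMod n, V i (i + 1) ^ 2 / Λ (μ i * Q i (i + 1)) (μ (i + 1) * Q (i + 1) i) :=
    action_toReal_formula hn Λ hΛ.symm hΛ.nonneg Q hQzero hQnn μ hμnn V hVas hVpos
  have hEv : (fun α : ℝ =>
      ((action Λ Q (fun i => (1 - α) * μ i + α * ν i)
          (fun i j => (1 - α) * V i j + α * U i j)).toReal
        - (action Λ Q μ V).toReal) / α)
      =ᶠ[nhdsWithin 0 (Set.Ioi 0)] (fun α : ℝ => ∑ i : ZMod n,
        (((1 - α) * V i (i + 1) + α * U i (i + 1)) ^ 2 /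
            Λ (((1 - α) * μ i + α * ν i) * Q i (i + 1))
              (((1 - α) * μ (i + 1) + α * ν (i + 1)) * Q (i + 1) i)
          - V i (i + 1) ^ 2 / Λ (μ i * Q i (i + 1)) (μ (i + 1) * Q (i + 1) i)) / α) := by
    filter_upwards [Ioo_mem_nhdsGT_of_mem (show (0:ℝ) ∈ Set.Ico 0 1 by norm_num)] with α hα
    obtain ⟨hα0, hα1⟩ := hα
    have hρnn : ∀ i : ZMod n, 0 ≤ (1 - α) * μ i + α * ν i := fun i =>
      add_nonneg (mul_nonneg (by linarith) (hμnn i)) (mul_nonneg hα0.le (hνnn i))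
    have hWas' : ∀ i j : ZMod n, (1 - α) * V i j + α * U i j
        = -((1 - α) * V j i + α * U j i) := by
      intro i j
      rw [hVas i j, hUas i j]
      ring
    have hWpos : ∀ x y : ZMod n, (1 - α) * V x y + α * U x y ≠ 0 →
        0 < ((1 - α) * μ x + α * ν x) * Q x y ∧ 0 < ((1 - α) * μ y + α * ν y) * Q y x := by
      intro x y hw
      by_cases hv : V x y = 0
      · have hu : U x y ≠ 0 := fun h => hw (by rw [hv, h]; ring)
        obtain ⟨h1, h2⟩ := hUpos x y hu
        constructor
        · calc (0:ℝ) < (1 - α) * (μ x * Q x y) + α * (ν x * Q x y) :=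
              add_pos_of_nonneg_of_pos (mul_nonneg (by linarith)
                (mul_nonneg (hμnn x) (hQnn x y))) (mul_pos hα0 h1)
            _ = ((1 - α) * μ x + α * ν x) * Q x y := by ring
        · calc (0:ℝ) < (1 - α) * (μ y * Q y x) + α * (ν y * Q y x) :=
              add_pos_of_nonneg_of_pos (mul_nonneg (by linarith)
                (mul_nonneg (hμnn y) (hQnn y x))) (mul_pos hα0 h2)
            _ = ((1 - α) * μ y + α * ν y) * Q y x := by ring
      · obtain ⟨h1, h2⟩ := hVpos x y hv
        constructor
        · calc (0:ℝ) < (1 - α) * (μ x * Q x y) + α * (ν x * Q x y) :=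
              add_pos_of_pos_of_nonneg (mul_pos (by linarith) h1)
                (mul_nonneg hα0.le (mul_nonneg (hνnn x) (hQnn x y)))
            _ = ((1 - α) * μ x + α * ν x) * Q x y := by ring
        · calc (0:ℝ) < (1 - α) * (μ y * Q y x) + α * (ν y * Q y x) :=
              add_pos_of_pos_of_nonneg (mul_pos (by linarith) h2)
                (mul_nonneg hα0.le (mul_nonneg (hνnn y) (hQnn y x)))
            _ = ((1 - α) * μ y + α * ν y) * Q y x := by ring
    have hFα := action_toReal_formula hn Λ hΛ.symm hΛ.nonneg Q hQzero hQnn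
      (fun i => (1 - α) * μ i + α * ν i) hρnn
      (fun i j => (1 - α) * V i j + α * U i j) hWas' hWpos
    rw [hFα, hF0, ← Finset.sum_sub_distrib, Finset.sum_div]
  have hlim := tendsto_finset_sum (Finset.univ : Finset (ZMod n))
    (fun i (_ : i ∈ Finset.univ) => hper i)
  -- evaluation of the limit sum
  have hsum : (∑ i : ZMod n, lf i)
      = M + ∑ j ∈ Finset.Icc 3 (n - 1), c ((j : ℕ) : ZMod n) := by
    rw [← Finset.sum_filter_add_sum_filter_not Finset.univ
      (fun i : ZMod n => i = 0 ∨ i = 1 ∨ i = 2) lf]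
    congr 1
    · have h1 : ∀ i ∈ Finset.univ.filter (fun i : ZMod n => i = 0 ∨ i = 1 ∨ i = 2),
          lf i = if i = 1 then M else 0 := by
        intro i hi
        rcases Finset.mem_filter.mp hi with ⟨-, hp2⟩
        by_cases h : i = 1
        · simp [hlf_def, h]
        · rcases hp2 with h0 | h1x | h2x
          · simp [hlf_def, h, h0]
          · exact absurd h1x h
          · simp [hlf_def, h, h2x]
      rw [Finset.sum_congr rfl h1, Finset.sum_ite_eq' _ 1 (fun _ => M), if_pos]
      exact Finset.mem_filter.mpr ⟨Finset.mem_univ _, Or.inr (Or.inl rfl)⟩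
    · have h2 : ∀ i ∈ Finset.univ.filter (fun i : ZMod n => ¬(i = 0 ∨ i = 1 ∨ i = 2)),
          lf i = c i := by
        intro i hi
        rcases Finset.mem_filter.mp hi with ⟨-, hp2⟩
        push_neg at hp2
        simp [hlf_def, hp2.1, hp2.2.1, hp2.2.2]
      rw [Finset.sum_congr rfl h2]
      refine (Finset.sum_nbij' (fun j : ℕ => ((j : ℕ) : ZMod n)) (fun x : ZMod n => x.val)
        ?_ ?_ ?_ ?_ ?_).symm
      · intro j hj
        rw [Finset.mem_Icc] at hj
        have hjlt : j < n := by omega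
        have hv : ((j : ZMod n)).val = j := ZMod.val_cast_of_lt hjlt
        refine Finset.mem_filter.mpr ⟨Finset.mem_univ _, ?_⟩
        show ¬((j : ZMod n) = 0 ∨ (j : ZMod n) = 1 ∨ (j : ZMod n) = 2)
        rintro (h | h | h)
        · rw [h] at hv; simp at hv; omega
        · rw [h, hval1] at hv; omega
        · rw [h, hval2] at hv; omega
      · intro x hx
        rcases Finset.mem_filter.mp hx with ⟨-, hp2⟩
        push_neg at hp2
        obtain ⟨h0, h1, h2⟩ := hp2
        have hinv : ((x.val : ℕ) : ZMod n) = x := ZMod.natCast_rightInverse x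
        have hvlt : x.val < n := ZMod.val_lt x
        have hv0 : x.val ≠ 0 := fun h => h0 (by rwa [(ZMod.val_eq_zero x)] at h)
        have hv1 : x.val ≠ 1 := by
          intro h
          apply h1
          rw [← hinv, h]
          push_cast
          ring
        have hv2 : x.val ≠ 2 := by
          intro h
          apply h2
          rw [← hinv, h]
          push_cast
          ring
        show x.val ∈ Finset.Icc 3 (n - 1)
        rw [Finset.mem_Icc]
        omega
      · intro j hj
        rw [Finset.mem_Icc] at hj
        show ((j : ZMod n)).val = j
        exact ZMod.val_cast_of_lt (by omega)
      · intro x _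
        show ((x.val : ℕ) : ZMod n) = x
        exact ZMod.natCast_rightInverse x
      · intro j _
        rfl
  rw [hsum] at hlim
  refine Filter.Tendsto.congr' hEv.symm ?_
  convert hlim using 2
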